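/- Let q : [0,∞) → ℝ be continuous and satisfy the Kamenev condition for some ε > 2 and t₀ > 0. Then every nontrivial solution x of the second-order linear equation x''(t) + q(t)x(t) = 0, t ≥ 0, oscillates: for every T > 0 there exist t₁, t₂ > T with x(t₁) < 0 and x(t₂) > 0. -/

import Mathlib

open Real MeasureTheory Filter

/-- The Caputo fractional derivative of order `α` of `h` at `t`:
`h^(α)(t) = (1/Γ(1−α)) ∫₀ᵗ h'(s) (t−s)^(−α) ds`. -/
noncomputable def caputoDeriv (α : ℝ) (h : ℝ → ℝ) (t : ℝ) : ℝ :=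
  (1 / Real.Gamma (1 - α)) * ∫ s in (0:ℝ)..t, deriv h s / (t - s) ^ α

/-- Kamenev condition: `limsup_{t→+∞} t^(−ε) ∫_{t₀}^t (t−s)^ε q(s) ds = +∞`. -/
def KamenevCondition (q : ℝ → ℝ) (ε t₀ : ℝ) : Prop :=
  ∀ M : ℝ, ∃ᶠ t in atTop, M < (1 / t ^ ε) * ∫ s in t₀..t, (t - s) ^ ε * q s

/-!
A solution that does not oscillate may be taken positive on a ray `(T, ∞)`: replace `x` by `-x`,
and note that a zero of a nonnegative solution is a double zero, so by uniqueness the solution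
would vanish identically. On that ray `w = x' / x` solves the Riccati equation `w' = -q - w²`.
Multiplying by `(t - s)^ε`, integrating by parts over `[a, t]` and completing the square in `w`
gives `∫ₐᵗ (t - s)^ε q(s) ds ≤ (t - a)^ε w(a) + ε² / (4(ε - 1)) (t - a)^(ε - 1)`,
so the Kamenev quotient stays bounded.
-/

open Set intervalIntegral Topology

theorem continuous_const_sub_rpow {t p : ℝ} (hp : 0 ≤ p) :
    Continuous fun s : ℝ => (t - s) ^ p :=
  (continuous_const.sub continuous_id).rpow_const fun _ => Or.inr hp

theorem hasDerivAt_const_sub_rpow {p s t : ℝ} (hs : s < t) :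
    HasDerivAt (fun s => (t - s) ^ p) (-(p * (t - s) ^ (p - 1))) s :=
  (((hasDerivAt_id' s).const_sub t).rpow_const (Or.inl (sub_pos.2 hs).ne')).congr_deriv
    (by ring)

section Riccati

variable {q w : ℝ → ℝ} {ε : ℝ}

theorem integral_rpow_mul_le_of_riccati {a t : ℝ} (hε : 1 < ε) (hat : a ≤ t)
    (hq : ContinuousOn q (Icc a t)) (hw : ContinuousOn w (Icc a t))
    (hw' : ∀ s ∈ Ioo a t, HasDerivAt w (-q s - w s ^ 2) s) :
    ∫ s in a..t, (t - s) ^ ε * q s ≤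
      (t - a) ^ ε * w a + ε ^ 2 / (4 * (ε - 1)) * (t - a) ^ (ε - 1) := by
  set c := ε ^ 2 / (4 * (ε - 1))
  have hbound := integral_le_sub_of_hasDeriv_right_of_le hat
    (g := fun s => -((t - s) ^ ε * w s + c * (t - s) ^ (ε - 1)))
    (g' := fun s => ε * (t - s) ^ (ε - 1) * w s + (t - s) ^ ε * (q s + w s ^ 2)
      + ε ^ 2 / 4 * (t - s) ^ (ε - 2))
    (φ := fun s => (t - s) ^ ε * q s)
    (((((continuous_const_sub_rpow (by linarith)).continuousOn).mul hw).add
      (((continuous_const_sub_rpow (by linarith)).continuousOn).const_smul c)).neg)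
    (fun s hs => by
      have h := ((hasDerivAt_const_sub_rpow (p := ε) hs.2).mul (hw' s hs)).add
        ((hasDerivAt_const_sub_rpow (p := ε - 1) hs.2).const_mul c)
      refine (h.neg.congr_deriv ?_).hasDerivWithinAt
      have hε1 : ε - 1 ≠ 0 := (sub_pos.2 hε).ne'
      rw [show ε - 1 - 1 = ε - 2 by ring]
      simp only [c]
      field_simp
      ring)
    ((((continuous_const_sub_rpow (by linarith)).continuousOn).mul hq).integrableOn_Icc)
    (fun s hs => by
      have hr : 0 < t - s := sub_pos.2 hs.2
      have h1 : (t - s) ^ (ε - 1) = (t - s) ^ (ε - 2) * (t - s) := by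
        rw [← rpow_add_one hr.ne']; ring_nf
      have h2 : (t - s) ^ ε = (t - s) ^ (ε - 2) * (t - s) ^ 2 := by
        rw [← rpow_natCast, ← rpow_add hr]; ring_nf
      have hsq : ε * (t - s) ^ (ε - 1) * w s + (t - s) ^ ε * (q s + w s ^ 2)
          + ε ^ 2 / 4 * (t - s) ^ (ε - 2) - (t - s) ^ ε * q s
          = (t - s) ^ (ε - 2) * ((t - s) * w s + ε / 2) ^ 2 := by
        rw [h1, h2]; ring
      have := rpow_nonneg hr.le (ε - 2)
      nlinarith [sq_nonneg ((t - s) * w s + ε / 2)])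
  simpa only [sub_self, zero_rpow (by linarith : ε ≠ 0), zero_rpow (by linarith : ε - 1 ≠ 0),
    zero_mul, mul_zero, add_zero, neg_zero, zero_sub, neg_neg] using hbound

theorem integral_rpow_mul_le_rpow_mul_integral_abs {t₀ a t : ℝ} (hε : 0 ≤ ε)
    (ht₀ : 0 ≤ t₀) (ht₀a : t₀ ≤ a) (hat : a ≤ t) (hq : ContinuousOn q (Icc t₀ a)) :
    ∫ s in t₀..a, (t - s) ^ ε * q s ≤ t ^ ε * ∫ s in t₀..a, |q s| := by
  rw [← intervalIntegral.integral_const_mul]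
  refine integral_mono_on ht₀a ?_ ?_ fun s hs => ?_
  · exact (((continuous_const_sub_rpow hε).continuousOn).mul hq).intervalIntegrable_of_Icc ht₀a
  · exact (hq.abs.const_smul (t ^ ε)).intervalIntegrable_of_Icc ht₀a
  · calc (t - s) ^ ε * q s ≤ (t - s) ^ ε * |q s| :=
          mul_le_mul_of_nonneg_left (le_abs_self _) (rpow_nonneg (by linarith [hs.2]) _)
      _ ≤ t ^ ε * |q s| :=
          mul_le_mul_of_nonneg_right
            (rpow_le_rpow (by linarith [hs.2]) (by linarith [hs.1]) hε) (abs_nonneg _)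

theorem not_kamenevCondition_of_riccati {t₀ T : ℝ} (hε : 1 < ε) (ht₀ : 0 ≤ t₀)
    (hq : ContinuousOn q (Ici t₀)) (hw : ∀ s > T, HasDerivAt w (-q s - w s ^ 2) s) :
    ¬ KamenevCondition q ε t₀ := by
  set a := max T t₀ + 1
  have hTa : T < a := by linarith [le_max_left T t₀]
  have ht₀a : t₀ < a := by linarith [le_max_right T t₀]
  set c := ε ^ 2 / (4 * (ε - 1))
  intro hK
  obtain ⟨t, hlarge, hat, ht⟩ := ((hK ((∫ s in t₀..a, |q s|) + |w a| + c)).and_eventually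
    ((eventually_ge_atTop a).and (eventually_ge_atTop 1))).exists
  refine hlarge.not_ge ?_
  have hφ : ContinuousOn (fun s => (t - s) ^ ε * q s) (Icc t₀ t) :=
    ((continuous_const_sub_rpow (by linarith)).continuousOn).mul (hq.mono Icc_subset_Ici_self)
  have hsplit := integral_add_adjacent_intervals (μ := volume)
    ((hφ.mono (Icc_subset_Icc_right hat)).intervalIntegrable_of_Icc ht₀a.le)
    ((hφ.mono (Icc_subset_Icc_left ht₀a.le)).intervalIntegrable_of_Icc hat)
  have hhead := integral_rpow_mul_le_rpow_mul_integral_abs (ε := ε) (t := t) (by linarith) ht₀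
    ht₀a.le hat (hq.mono Icc_subset_Ici_self)
  have htail := integral_rpow_mul_le_of_riccati hε hat
    (hq.mono (Icc_subset_Ici_self.trans (Ici_subset_Ici.2 ht₀a.le)))
    (fun s hs => (hw s (hTa.trans_le hs.1)).continuousAt.continuousWithinAt)
    (fun s hs => hw s (hTa.trans hs.1))
  have hwa : (t - a) ^ ε * w a ≤ t ^ ε * |w a| :=
    calc (t - a) ^ ε * w a ≤ (t - a) ^ ε * |w a| :=
          mul_le_mul_of_nonneg_left (le_abs_self _) (rpow_nonneg (by linarith) _)
      _ ≤ t ^ ε * |w a| :=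
          mul_le_mul_of_nonneg_right (rpow_le_rpow (by linarith) (by linarith) (by linarith))
            (abs_nonneg _)
  have hpow : c * (t - a) ^ (ε - 1) ≤ c * t ^ ε := by
    refine mul_le_mul_of_nonneg_left ?_ (by positivity)
    calc (t - a) ^ (ε - 1) ≤ t ^ (ε - 1) :=
          rpow_le_rpow (by linarith) (by linarith) (by linarith)
      _ ≤ t ^ ε := rpow_le_rpow_of_exponent_le ht (by linarith)
  rw [one_div, inv_mul_le_iff₀ (rpow_pos_of_pos (by linarith) ε), ← hsplit]
  linarith

end Riccati

namespace SecondOrderLinearODE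

variable {q x x' : ℝ → ℝ}

theorem eqOn_zero_of_double_zero {a b c : ℝ} (hq : ContinuousOn q (Icc a b))
    (hx : ∀ t ∈ Ioo a b, HasDerivAt x (x' t) t)
    (hx' : ∀ t ∈ Ioo a b, HasDerivAt x' (-q t * x t) t)
    (hc : c ∈ Ioo a b) (hxc : x c = 0) (hxc' : x' c = 0) :
    EqOn x 0 (Ioo a b) := by
  obtain ⟨C, hC⟩ := isCompact_Icc.exists_bound_of_continuousOn hq
  have hlip : ∀ t ∈ Ioo a b, LipschitzOnWith (max 1 C.toNNReal)
      (fun y : ℝ × ℝ => (y.2, -q t * y.1)) univ := by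
    intro t ht
    have hqt : ‖-q t‖₊ ≤ C.toNNReal := by
      rw [nnnorm_neg, ← NNReal.coe_le_coe, coe_nnnorm]
      exact (hC t (Ioo_subset_Icc_self ht)).trans (le_max_left _ _)
    refine (LipschitzWith.prod_snd.prodMk
      (((lipschitzWith_smul (-q t)).comp LipschitzWith.prod_fst).weaken ?_)).lipschitzOnWith
    rwa [mul_one]
  have hsol := ODE_solution_unique_of_mem_Ioo hlip hc
    (f := fun t => (x t, x' t)) (g := fun _ => 0)
    (fun t ht => ⟨(hx t ht).prodMk (hx' t ht), mem_univ _⟩)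
    (fun t _ => ⟨(hasDerivAt_const t 0).congr_deriv (by ext <;> simp), mem_univ _⟩)
    (by simp [hxc, hxc'])
  exact fun t ht => congrArg Prod.fst (hsol ht)

theorem eq_zero_of_double_zero {a c : ℝ} (hq : ContinuousOn q (Ici a))
    (hx : ∀ t > a, HasDerivAt x (x' t) t) (hx' : ∀ t > a, HasDerivAt x' (-q t * x t) t)
    (hxa : ContinuousWithinAt x (Ici a) a)
    (hc : a < c) (hxc : x c = 0) (hxc' : x' c = 0) :
    ∀ t ≥ a, x t = 0 := by
  have hIoi : ∀ t > a, x t = 0 := fun t ht =>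
    eqOn_zero_of_double_zero (b := max c t + 1) (hq.mono Icc_subset_Ici_self)
      (fun s hs => hx s hs.1) (fun s hs => hx' s hs.1)
      ⟨hc, by linarith [le_max_left c t]⟩ hxc hxc' ⟨ht, by linarith [le_max_right c t]⟩
  intro t ht
  obtain rfl | ht := ht.eq_or_lt
  · have hzero : x =ᶠ[𝓝[>] a] fun _ => 0 := eventually_nhdsWithin_of_forall hIoi
    exact tendsto_nhds_unique (hxa.mono Ioi_subset_Ici_self) (tendsto_const_nhds.congr' hzero.symm)
  · exact hIoi t ht

theorem hasDerivAt_div {c t : ℝ} (hx : HasDerivAt x (x' t) t)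
    (hx' : HasDerivAt x' (-c * x t) t) (hxt : x t ≠ 0) :
    HasDerivAt (fun s => x' s / x s) (-c - (x' t / x t) ^ 2) t :=
  (hx'.div hx hxt).congr_deriv (by field_simp)

theorem not_forall_nonneg_of_kamenevCondition {ε t₀ : ℝ} (hε : 1 < ε) (ht₀ : 0 ≤ t₀)
    (hq : ContinuousOn q (Ici 0)) (hK : KamenevCondition q ε t₀)
    (hx : ∀ t > 0, HasDerivAt x (x' t) t) (hx' : ∀ t > 0, HasDerivAt x' (-q t * x t) t)
    (hx0 : ContinuousWithinAt x (Ici 0) 0) (hnt : ¬ ∀ t ≥ 0, x t = 0) (T : ℝ) :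
    ¬ ∀ t > T, 0 ≤ x t := by
  intro hnonneg
  have hpos : ∀ t > max T 0, 0 < x t := by
    intro t ht
    have hT : T < t := (le_max_left T 0).trans_lt ht
    have h0 : 0 < t := (le_max_right T 0).trans_lt ht
    refine (hnonneg t hT).lt_of_ne' fun hxt => hnt ?_
    have hmin : IsLocalMin x t := by
      filter_upwards [Ioi_mem_nhds hT] with s hs
      rw [hxt]
      exact hnonneg s hs
    exact eq_zero_of_double_zero hq hx hx' hx0 h0 hxt (hmin.hasDerivAt_eq_zero (hx t h0))
  exact not_kamenevCondition_of_riccati hε ht₀ (hq.mono (Ici_subset_Ici.2 ht₀))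
    (fun s hs => hasDerivAt_div (hx s ((le_max_right T 0).trans_lt hs))
      (hx' s ((le_max_right T 0).trans_lt hs)) (hpos s hs).ne') hK

end SecondOrderLinearODE

theorem kamenev_oscillation_second_order_linear
    (ε t₀ : ℝ) (hε : 2 < ε) (ht₀ : 0 < t₀)
    (q : ℝ → ℝ) (hq : ContinuousOn q (Set.Ici (0:ℝ)))
    (hK : KamenevCondition q ε t₀)
    (x : ℝ → ℝ) (hx : ContDiffOn ℝ 2 x (Set.Ici (0:ℝ)))
    (heq : ∀ t ≥ (0:ℝ), deriv (deriv x) t + q t * x t = 0)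
    (hnt : ¬ ∀ t ≥ (0:ℝ), x t = 0) :
    ∀ T > (0:ℝ), (∃ t₁ > T, x t₁ < 0) ∧ ∃ t₂ > T, 0 < x t₂ := by
  have hε : 1 < ε := by linarith
  have hC2 : ContDiffOn ℝ 2 x (Ioi 0) := hx.mono Ioi_subset_Ici_self
  have hC1 : ContDiffOn ℝ 1 (deriv x) (Ioi 0) := hC2.deriv_of_isOpen isOpen_Ioi (by norm_num)
  have hx1 : ∀ t > 0, HasDerivAt x (deriv x t) t := fun t ht =>
    ((hC2.differentiableOn (by norm_num)).differentiableAt (Ioi_mem_nhds ht)).hasDerivAt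
  have hx2 : ∀ t > 0, HasDerivAt (deriv x) (-q t * x t) t := fun t ht => by
    rw [neg_mul, ← eq_neg_of_add_eq_zero_left (heq t ht.le)]
    exact ((hC1.differentiableOn (by norm_num)).differentiableAt (Ioi_mem_nhds ht)).hasDerivAt
  have hx0 : ContinuousWithinAt x (Ici 0) 0 := hx.continuousOn.continuousWithinAt self_mem_Ici
  intro T _
  constructor
  · by_contra! h
    exact SecondOrderLinearODE.not_forall_nonneg_of_kamenevCondition hε ht₀.le hq hK
      hx1 hx2 hx0 hnt T h
  · by_contra! h
    exact SecondOrderLinearODE.not_forall_nonneg_of_kamenevCondition hε ht₀.le hq hK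
      (x := fun t => -x t) (fun t ht => (hx1 t ht).neg)
      (fun t ht => (hx2 t ht).neg.congr_deriv (by ring)) hx0.neg
      (by simpa using hnt) T (fun t ht => by simpa using h t ht)
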